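/- arXiv:math/0101235 — 2 statements merged into one kernel-verified Lean document; each statement's English description precedes it below -/
import Mathlib

section
/- For every n ≥ 0, every r ≥ 3, and every non-decreasing function f : ℕ → ℝ, the maximum of e_f(G) over all K_r-free graphs G on n vertices equals the maximum of e_f(H) over all complete (r−1)-partite graphs H on n vertices. -/
/-- `eSum f G = ∑_{x ∈ V} f(deg_G x)`. -/
noncomputable def eSum {V : Type*} [Fintype V] (f : ℕ → ℝ) (G : SimpleGraph V) : ℝ :=
  ∑ x : V, f ((G.neighborSet x).ncard)

/-- `H` is a complete `k`-partite graph: there is a partition of the vertices into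
`k` (possibly empty) classes such that two vertices are adjacent iff they lie in
different classes. -/
def IsCompleteMultipartite {V : Type*} (k : ℕ) (H : SimpleGraph V) : Prop :=
  ∃ c : V → Fin k, ∀ x y : V, H.Adj x y ↔ c x ≠ c y

/-!
Erdős' degree-majorisation argument, by induction on `r`. Let `x` be a vertex of maximum degree
and `A` its neighbourhood; `G[A]` is `K_{r-1}`-free, so induction gives a complete
`(r-2)`-partite graph on `A` dominating its degrees, and adding `V \ A` as one further part
yields a complete `(r-1)`-partite graph `H` with `deg_H ≥ deg_G` everywhere: a vertex of `A`
gains all of `V \ A`, and a vertex outside `A` is joined to all of `A`, i.e. to `deg_G x`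
vertices. Since `f` is non-decreasing, `e_f(G) ≤ e_f(H)`, and complete `(r-1)`-partite graphs
are `K_r`-free.
-/

open Classical in
noncomputable def extendColoring {V : Type*} {k : ℕ} (A : Set V) (c : A → Fin k) (v : V) :
    Fin (k + 1) :=
  if h : v ∈ A then (c ⟨v, h⟩).succ else 0

section extendColoring

variable {V : Type*} {k : ℕ} {A : Set V} (c : A → Fin k)

theorem le_ncard_extendColoring_ne_of_mem [Finite V] (v : A) :
    {y : A | c v ≠ c y}.ncard + Aᶜ.ncard ≤
      {y | extendColoring A c v ≠ extendColoring A c y}.ncard := by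
  have hdisj : Disjoint (Subtype.val '' {y : A | c v ≠ c y}) Aᶜ := by
    rw [Set.disjoint_right]
    rintro y hy ⟨z, -, rfl⟩
    exact hy z.2
  have hsub : Subtype.val '' {y : A | c v ≠ c y} ∪ Aᶜ ⊆
      {y | extendColoring A c v ≠ extendColoring A c y} := by
    rintro y (⟨z, hz, rfl⟩ | hy)
    · simpa [extendColoring] using hz
    · have hy : y ∉ A := hy
      simp [extendColoring, hy]
  rw [← Set.ncard_image_of_injective _ Subtype.val_injective,
    ← Set.ncard_union_eq hdisj]
  exact Set.ncard_le_ncard hsub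

theorem subset_extendColoring_ne_of_notMem {v : V} (hv : v ∉ A) :
    A ⊆ {y | extendColoring A c v ≠ extendColoring A c y} := by
  intro y hy
  simpa [extendColoring, hv, hy] using (Fin.succ_ne_zero _).symm

end extendColoring

namespace SimpleGraph

variable {V : Type*} {k : ℕ}

theorem ncard_neighborSet_le_induce_add_compl [Finite V] (G : SimpleGraph V) {A : Set V}
    (v : A) : (G.neighborSet v).ncard ≤ ((G.induce A).neighborSet v).ncard + Aᶜ.ncard := by
  have hsub : G.neighborSet v ⊆ Subtype.val '' (G.induce A).neighborSet v ∪ Aᶜ := by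
    intro y hy
    by_cases hyA : y ∈ A
    · exact Or.inl ⟨⟨y, hyA⟩, hy, rfl⟩
    · exact Or.inr hyA
  calc (G.neighborSet v).ncard
      ≤ (Subtype.val '' (G.induce A).neighborSet v ∪ Aᶜ).ncard := Set.ncard_le_ncard hsub
    _ ≤ (Subtype.val '' (G.induce A).neighborSet v).ncard + Aᶜ.ncard := Set.ncard_union_le _ _
    _ = _ := by rw [Set.ncard_image_of_injective _ Subtype.val_injective]

theorem CliqueFree.induce_neighborSet {G : SimpleGraph V} (hG : G.CliqueFree (k + 1)) (x : V) :
    (G.induce (G.neighborSet x)).CliqueFree k :=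
  (G.cliqueFree_induce_iff _ _).2 <| by
    simpa using CliqueFreeOn.of_succ G hG.cliqueFreeOn (Set.mem_univ x)

theorem exists_coloring_ncard_neighborSet_le [Finite V] {G : SimpleGraph V}
    (hG : G.CliqueFree (k + 1)) :
    ∃ c : V → Fin k, ∀ v, (G.neighborSet v).ncard ≤ {y | c v ≠ c y}.ncard := by
  induction k generalizing V with
  | zero =>
    have : IsEmpty V := cliqueFree_one.1 hG
    exact ⟨isEmptyElim, isEmptyElim⟩
  | succ k ih =>
    cases isEmpty_or_nonempty V
    · exact ⟨isEmptyElim, isEmptyElim⟩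
    obtain ⟨x, hx⟩ := Finite.exists_max fun v => (G.neighborSet v).ncard
    set A := G.neighborSet x
    obtain ⟨c, hc⟩ := ih (hG.induce_neighborSet x)
    refine ⟨extendColoring A c, fun v => ?_⟩
    by_cases hv : v ∈ A
    · calc (G.neighborSet v).ncard
          ≤ ((G.induce A).neighborSet ⟨v, hv⟩).ncard + Aᶜ.ncard :=
            G.ncard_neighborSet_le_induce_add_compl ⟨v, hv⟩
        _ ≤ {y : A | c ⟨v, hv⟩ ≠ c y}.ncard + Aᶜ.ncard := Nat.add_le_add_right (hc _) _
        _ ≤ _ := le_ncard_extendColoring_ne_of_mem c ⟨v, hv⟩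
    · calc (G.neighborSet v).ncard ≤ A.ncard := hx v
        _ ≤ _ := Set.ncard_le_ncard (subset_extendColoring_ne_of_notMem c hv)

end SimpleGraph

theorem exists_isCompleteMultipartite_ncard_neighborSet_le {k : ℕ} {V : Type*} [Finite V]
    {G : SimpleGraph V} (hG : G.CliqueFree (k + 1)) :
    ∃ H : SimpleGraph V, IsCompleteMultipartite k H ∧
      ∀ v, (G.neighborSet v).ncard ≤ (H.neighborSet v).ncard := by
  obtain ⟨c, hc⟩ := SimpleGraph.exists_coloring_ncard_neighborSet_le hG
  exact ⟨(⊤ : SimpleGraph (Fin k)).comap c, ⟨c, fun _ _ => Iff.rfl⟩, hc⟩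

theorem IsCompleteMultipartite.cliqueFree {V : Type*} {k : ℕ} {H : SimpleGraph V}
    (hH : IsCompleteMultipartite k H) : H.CliqueFree (k + 1) := by
  obtain ⟨c, hc⟩ := hH
  exact SimpleGraph.Colorable.cliqueFree ⟨SimpleGraph.Coloring.mk c fun h => (hc _ _).1 h⟩
    k.lt_succ_self

theorem eSum_le_eSum {V : Type*} [Fintype V] {f : ℕ → ℝ} (hf : Monotone f)
    {G H : SimpleGraph V} (h : ∀ v, (G.neighborSet v).ncard ≤ (H.neighborSet v).ncard) :
    eSum f G ≤ eSum f H :=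
  Finset.sum_le_sum fun v _ => hf (h v)

/-- For every `n ≥ 0`, `r ≥ 3` and non-decreasing `f : ℕ → ℝ`, the maximum of
`e_f` over `K_r`-free graphs on `n` vertices equals the maximum of `e_f` over
complete `(r-1)`-partite graphs on `n` vertices. -/
theorem stmt1 (n r : ℕ) (hr : 3 ≤ r) (f : ℕ → ℝ) (hf : Monotone f) :
    sSup {y : ℝ | ∃ G : SimpleGraph (Fin n), G.CliqueFree r ∧ y = eSum f G} =
    sSup {y : ℝ | ∃ H : SimpleGraph (Fin n),
      IsCompleteMultipartite (r - 1) H ∧ y = eSum f H} := by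
  obtain ⟨k, rfl⟩ : ∃ k, r = k + 1 := ⟨r - 1, by omega⟩
  apply csSup_eq_csSup_of_forall_exists_le
  · rintro _ ⟨G, hG, rfl⟩
    obtain ⟨H, hH, hdeg⟩ := exists_isCompleteMultipartite_ncard_neighborSet_le hG
    exact ⟨eSum f H, ⟨H, hH, rfl⟩, eSum_le_eSum hf hdeg⟩
  · rintro _ ⟨H, hH, rfl⟩
    exact ⟨eSum f H, ⟨H, hH.cliqueFree, rfl⟩, le_rfl⟩
end

section
/- Let t ≥ 1 and let G₀ be a K_{t,t}-free graph on n vertices. Let G be the graph on 2n vertices obtained from the complete bipartite graph K_{n,n} by adding a copy of G₀ inside each of the two parts. Then G contains no copy of K₃(2t−1), the complete tripartite graph with all three parts of size 2t−1. -/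
/-!
Colour every vertex of a copy of `K₃(2t-1)` by the side of `K_{n,n}` it lies in. Each part of
size `2t-1` has `t` vertices of a common colour, and by pigeonhole two of the three parts share
that colour. Any two parts are completely joined, so these `2t` vertices span a `K_{t,t}` on
one side, i.e. inside a copy of `G₀`.
-/

def Free {α β : Type*} (F : SimpleGraph α) (G : SimpleGraph β) : Prop :=
  ¬ ∃ φ : α ↪ β, ∀ a b : α, F.Adj a b → G.Adj (φ a) (φ b)

open Function Fintype

theorem free_iff_simpleGraph_free {α β : Type*} {F : SimpleGraph α} {G : SimpleGraph β} :
    Free F G ↔ F.Free G := by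
  rw [SimpleGraph.Free, SimpleGraph.isContained_iff_exists_le_comap]
  rfl

theorem Fintype.exists_embedding_fin_forall_eq {α C : Type*} [Fintype α] [Fintype C]
    [DecidableEq C] (f : α → C) {n : ℕ} (h : card C * n < card α) :
    ∃ c, ∃ e : Fin (n + 1) ↪ α, ∀ a, f (e a) = c := by
  obtain ⟨c, hc⟩ := exists_lt_card_fiber_of_mul_lt_card f h
  obtain ⟨e⟩ := Embedding.nonempty_of_card_le (α := Fin (n + 1)) (β := {x // f x = c})
    (by rwa [card_fin, card_subtype])
  exact ⟨c, e.trans (Embedding.subtype _), fun a => (e a).2⟩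

namespace SimpleGraph

variable {α β V W : Type*}

def completeMultipartiteGraph.copyCompleteBipartite {ι : Type*} {P : ι → Type*} {i j : ι}
    (hij : i ≠ j) (f : α ↪ P i) (g : β ↪ P j) :
    Copy (completeBipartiteGraph α β) (completeMultipartiteGraph P) where
  toHom :=
    { toFun := Sum.elim (fun a => ⟨i, f a⟩) (fun b => ⟨j, g b⟩)
      map_rel' := by
        rintro (a | b) (a' | b') h <;> simp_all [completeMultipartiteGraph, Ne.symm hij] }
  injective' := by
    rintro (a | b) (a' | b') h <;> simp_all [Ne.symm hij]

theorem Copy.isContained_of_forall_mem_range {F : SimpleGraph α} {G : SimpleGraph V}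
    {H : SimpleGraph W} (f : V → W) (hf : ∀ x y, H.Adj (f x) (f y) → G.Adj x y)
    (c : Copy F H) (hc : ∀ a, c a ∈ Set.range f) : F ⊑ G := by
  choose g hg using hc
  refine ⟨⟨⟨g, fun {a b} hab => hf _ _ ?_⟩, fun a b hab => c.injective ?_⟩⟩
  · rw [hg, hg]
    exact c.toHom.map_adj hab
  · change c a = c b
    rw [← hg, ← hg]
    exact congrArg f hab

theorem exists_copy_completeBipartiteGraph_forall_eq {ι C : Type*} [Fintype ι] [Fintype C]
    [DecidableEq C] {P : ι → Type*} [∀ i, Fintype (P i)] {H : SimpleGraph W}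
    (φ : Copy (completeMultipartiteGraph P) H) (color : W → C) (n : ℕ)
    (hι : card C < card ι) (hP : ∀ i, card C * n < card (P i)) :
    ∃ c, ∃ κ : Copy (completeBipartiteGraph (Fin (n + 1)) (Fin (n + 1))) H,
      ∀ a, color (κ a) = c := by
  choose c e he using fun i => exists_embedding_fin_forall_eq (fun p => color (φ ⟨i, p⟩)) (hP i)
  obtain ⟨i, j, hij, hc⟩ := exists_ne_map_eq_of_card_lt c hι
  refine ⟨c i, φ.comp (completeMultipartiteGraph.copyCompleteBipartite hij (e i) (e j)), ?_⟩
  rintro (a | a)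
  · exact he i a
  · exact (he j a).trans hc.symm

theorem Copy.isContained_of_forall_isLeft_eq {F : SimpleGraph α} {G₀ : SimpleGraph V}
    (κ : Copy F (_root_.completeBipartiteGraph V V ⊔ G₀.map Function.Embedding.inl ⊔
      G₀.map Function.Embedding.inr))
    (side : Bool) (hκ : ∀ a, (κ a).isLeft = side) : F ⊑ G₀ := by
  cases side
  · exact κ.isContained_of_forall_mem_range Sum.inr (fun x y => by simp)
      fun a => by simpa [Set.range_inr] using hκ a
  · exact κ.isContained_of_forall_mem_range Sum.inl (fun x y => by simp)
      fun a => by simpa [Set.range_inl] using hκ a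

end SimpleGraph

theorem stmt13_general {V : Type*} (t : ℕ) (ht : 1 ≤ t) (G₀ : SimpleGraph V)
    (hfree : Free (completeBipartiteGraph (Fin t) (Fin t)) G₀) :
    Free (SimpleGraph.completeMultipartiteGraph (fun _ : Fin 3 => Fin (2 * t - 1)))
      (completeBipartiteGraph V V ⊔ G₀.map Function.Embedding.inl ⊔
        G₀.map Function.Embedding.inr) := by
  obtain ⟨m, rfl⟩ : ∃ m, t = m + 1 := ⟨t - 1, by omega⟩
  rw [free_iff_simpleGraph_free] at hfree ⊢
  rintro ⟨φ⟩
  obtain ⟨side, κ, hκ⟩ := SimpleGraph.exists_copy_completeBipartiteGraph_forall_eq φ Sum.isLeft m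
    (by simp) (fun _ => by simp; omega)
  exact hfree (κ.isContained_of_forall_isLeft_eq side hκ)

/-- Let `G₀` be a `K_{t,t}`-free graph on `n` vertices. The graph on `2n`
vertices obtained from the complete bipartite graph `K_{n,n}` by placing a copy
of `G₀` inside each of the two parts contains no copy of `K₃(2t-1)`, the
complete tripartite graph with all three parts of size `2t-1`. -/
theorem stmt13 {V : Type*} [Fintype V] (n t : ℕ) (ht : 1 ≤ t)
    (hn : Fintype.card V = n) (G₀ : SimpleGraph V)
    (hfree : Free (completeBipartiteGraph (Fin t) (Fin t)) G₀) :
    Free (SimpleGraph.completeMultipartiteGraph (fun _ : Fin 3 => Fin (2 * t - 1)))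
      (completeBipartiteGraph V V ⊔ G₀.map Function.Embedding.inl ⊔
        G₀.map Function.Embedding.inr) :=
  stmt13_general t ht G₀ hfree
end
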